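/- Let I ⊆ 1:N be any block and let P denote the marginal distribution of X on A^I and P̂_n the empirical distribution obtained from an i.i.d. sample of size n from P. Then for any α > 0, the Kullback–Leibler divergence satisfies D(P̂_n ‖ P) < α·log(n)/n eventually almost surely as n → ∞; that is, with probability one there exists n₀ such that for all n ≥ n₀ the inequality holds. -/

import Mathlib

open MeasureTheory ProbabilityTheory Filter
open scoped Classical

noncomputable section

namespace MultiSeg

/-- The configuration space `A 0 × ⋯ × A (N-1)`. -/
abbrev Config {N : ℕ} (A : Fin N → Type*) : Type _ := ∀ i, A i

/-- The block of (0-based) positions `l ≤ i < r`, representing the integer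
interval `(l+1):r` in 1-based notation. -/
def block (N l r : ℕ) : Finset (Fin N) :=
  Finset.univ.filter fun i => l ≤ (i : ℕ) ∧ (i : ℕ) < r

/-- Strings over the block `I`. -/
abbrev Str {N : ℕ} (A : Fin N → Type*) (I : Finset (Fin N)) : Type _ :=
  ∀ i : {j : Fin N // j ∈ I}, A i.1

/-- The cylinder set of configurations agreeing with `b` on `I`. -/
def cyl {N : ℕ} {A : Fin N → Type*} (I : Finset (Fin N)) (b : Str A I) : Set (Config A) :=
  {x | ∀ i : {j : Fin N // j ∈ I}, x i.1 = b i}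

/-- Marginal probability of the string `b` over the block `I`. -/
def marg {N : ℕ} {A : Fin N → Type*} [∀ i, MeasurableSpace (A i)]
    (P : Measure (Config A)) (I : Finset (Fin N)) (b : Str A I) : ℝ :=
  (P (cyl I b)).toReal

/-- The cut `c` (`0 < c < N`), i.e. the half-integer point `c + 1/2` in 1-based
position notation, is a point of independence for the law `P`:
the coordinates `< c` are independent of the coordinates `≥ c`. -/
def IsIndepCut {N : ℕ} {A : Fin N → Type*} [∀ i, MeasurableSpace (A i)]
    (P : Measure (Config A)) (c : ℕ) : Prop :=
  0 < c ∧ c < N ∧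
    ∀ (b₁ : Str A (block N 0 c)) (b₂ : Str A (block N c N)),
      P (cyl (block N 0 c) b₁ ∩ cyl (block N c N) b₂)
        = P (cyl (block N 0 c) b₁) * P (cyl (block N c N) b₂)

/-- `U*`: the (finite) set of all points of independence of `P`, as cuts. -/
def indepCuts {N : ℕ} {A : Fin N → Type*} [∀ i, MeasurableSpace (A i)]
    (P : Measure (Config A)) : Finset ℕ :=
  (Finset.Ioo 0 N).filter fun c => IsIndepCut P c

/-- Empirical count `N_n(b)` of the string `b` over block `I` in the first `n` samples. -/
def count {N : ℕ} {A : Fin N → Type*} {Ω : Type*}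
    (X : ℕ → Ω → Config A) (I : Finset (Fin N)) (b : Str A I) (n : ℕ) (ω : Ω) : ℕ :=
  ((Finset.range n).filter fun k => ∀ i : {j : Fin N // j ∈ I}, X k ω i.1 = b i).card

/-- `Q_n(I) = Σ_b N_n(b) log (N_n(b)/n)` (the convention `0 · log 0 = 0` is automatic
since `Real.log 0 = 0`). -/
def Q {N : ℕ} {A : Fin N → Type*} [∀ i, Fintype (A i)] {Ω : Type*}
    (X : ℕ → Ω → Config A) (I : Finset (Fin N)) (n : ℕ) (ω : Ω) : ℝ :=
  ∑ b : Str A I, (count X I b n ω : ℝ) * Real.log ((count X I b n ω : ℝ) / n)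

/-- The blocks `B(U)` induced by the set of cuts `C` on positions `0,…,M-1`:
pairs `(l, r)` of consecutive elements of `C ∪ {0, M}`. -/
def blocksOf (M : ℕ) (C : Finset ℕ) : Finset (ℕ × ℕ) :=
  ((insert 0 (insert M C)) ×ˢ (insert 0 (insert M C))).filter
    fun p => p.1 < p.2 ∧ ∀ c ∈ C, ¬ (p.1 < c ∧ c < p.2)

/-- Penalized log-likelihood `ℓ̂_n(U) - pen(U,n)` of the segmentation given by cuts `C`. -/
def score {N : ℕ} {A : Fin N → Type*} [∀ i, Fintype (A i)] {Ω : Type*}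
    (X : ℕ → Ω → Config A) (ppen : ℕ → ℕ → ℝ) (n : ℕ) (ω : Ω) (C : Finset ℕ) : ℝ :=
  ∑ p ∈ blocksOf N C, (Q X (block N p.1 p.2) n ω - ppen p.1 p.2 * Real.log n)

/-- `Q̃_n(l:r) = Q_n(l:r) - p(l:r) log n`, with the convention `Q̃_n(∅) = 0`. -/
def Qt {N : ℕ} {A : Fin N → Type*} [∀ i, Fintype (A i)] {Ω : Type*}
    (X : ℕ → Ω → Config A) (ppen : ℕ → ℕ → ℝ) (n : ℕ) (ω : Ω) (l r : ℕ) : ℝ :=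
  if l < r then Q X (block N l r) n ω - ppen l r * Real.log n else 0

/-- an element of `Ico l r` maximizing `f` (or `l` if the interval is empty). -/
def argmaxIco (f : ℕ → ℝ) (l r : ℕ) : ℕ :=
  if h : (Finset.Ico l r).Nonempty then
    (Finset.exists_max_image (Finset.Ico l r) f h).choose
  else l

/-- The hierarchical (divide and conquer) algorithm `H` applied to the block `l:r`,
driven by the penalized likelihood `q l r = Q̃_n(l:r)`:  compute the best split point
`c` of `[l, r)` (where `c = l` means "no split"); if a genuine split is best, recurse
on both halves. -/
def Hrec (q : ℕ → ℕ → ℝ) (l r : ℕ) : Finset ℕ :=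
  let c := argmaxIco (fun m => q l m + q m r) l r
  if h : l < c ∧ c < r then {c} ∪ Hrec q l c ∪ Hrec q c r else ∅
termination_by r - l
decreasing_by all_goals omega

/-- Kullback-Leibler divergence between two distributions on a finite set. -/
def KL {α : Type*} [Fintype α] (p q : α → ℝ) : ℝ :=
  ∑ a, if 0 < p a then p a * Real.log (p a / q a) else 0

/-- Restriction of a string on `I` to a sub-block `J ⊆ I`. -/
def restrict {N : ℕ} {A : Fin N → Type*} {I J : Finset (Fin N)} (h : J ⊆ I)
    (a : Str A I) : Str A J :=
  fun j => a ⟨j.1, h j.2⟩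

lemma block_subset_left {N l c r : ℕ} (h : c ≤ r) : block N l c ⊆ block N l r := by
  intro i hi
  simp only [block, Finset.mem_filter, Finset.mem_univ, true_and] at hi ⊢
  omega

lemma block_subset_right {N l c r : ℕ} (h : l ≤ c) : block N c r ⊆ block N l r := by
  intro i hi
  simp only [block, Finset.mem_filter, Finset.mem_univ, true_and] at hi ⊢
  omega

end MultiSeg

/-!
Since `log t ≤ t - 1`, the divergence is dominated by the chi-square distance,
`D(P̂ₙ ‖ P) ≤ ∑_b (Nₙ(b) - n P(b))² / (n² P(b))`, so it suffices that almost surely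
`(Nₙ(b) - n P(b))² ≤ κ n log n` eventually, for every `κ > 0`. The centred indicators of a
string are sub-Gaussian (Hoeffding's lemma). On a geometric grid `ν_k ≈ ρ^k` with `ρ` close to
`1`, Hoeffding's inequality and Borel–Cantelli control the partial sums at the grid points, and a
union bound over each block `[ν_k, ν_{k+1})`, whose length is a small fraction of `ν_k`, controls
the increments inside the blocks.
-/

section Hoeffding

variable {Ω : Type*} [MeasurableSpace Ω] {μ : Measure Ω} [IsProbabilityMeasure μ]
  {ι : Type*} {Y : ι → Ω → ℝ} {c : NNReal}

lemma measureReal_le_abs_sum_le (hindep : iIndepFun Y μ)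
    (hY : ∀ i, HasSubgaussianMGF (Y i) c μ) (s : Finset ι) {ε : ℝ} (hε : 0 ≤ ε) :
    μ.real {ω | ε ≤ |∑ i ∈ s, Y i ω|} ≤ 2 * Real.exp (-ε ^ 2 / (2 * s.card * c)) := by
  have hneg : iIndepFun (fun i => -Y i) μ := hindep.comp (fun _ x => -x) fun _ => measurable_neg
  have hbound : ∀ Z : ι → Ω → ℝ, iIndepFun Z μ → (∀ i, HasSubgaussianMGF (Z i) c μ) →
      μ.real {ω | ε ≤ ∑ i ∈ s, Z i ω} ≤ Real.exp (-ε ^ 2 / (2 * s.card * c)) := fun Z hZ hZc => by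
    simpa [mul_assoc] using
      HasSubgaussianMGF.measure_sum_ge_le_of_iIndepFun hZ (fun i _ => hZc i) hε
  calc μ.real {ω | ε ≤ |∑ i ∈ s, Y i ω|}
      ≤ μ.real ({ω | ε ≤ ∑ i ∈ s, Y i ω} ∪ {ω | ε ≤ ∑ i ∈ s, (-Y i) ω}) := by
        refine measureReal_mono (fun ω hω => ?_)
        simpa [le_abs', or_comm, le_neg] using hω
    _ ≤ _ := (measureReal_union_le _ _).trans (by
        linarith [hbound Y hindep hY, hbound _ hneg fun i => (hY i).neg])

lemma measureReal_le_abs_sum_le_of_card_le (hindep : iIndepFun Y μ)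
    (hY : ∀ i, HasSubgaussianMGF (Y i) c μ) (hc : 0 < c) {s : Finset ι} {m ε : ℝ}
    (hm : s.card ≤ m) (hε : 0 < ε) :
    μ.real {ω | ε ≤ |∑ i ∈ s, Y i ω|} ≤ 2 * Real.exp (-ε ^ 2 / (2 * m * c)) := by
  rcases s.eq_empty_or_nonempty with rfl | hs
  · simp [not_le.2 hε]
    positivity
  refine (measureReal_le_abs_sum_le hindep hY s hε.le).trans ?_
  have : (0 : ℝ) < s.card := by exact_mod_cast hs.card_pos
  rw [neg_div, neg_div]
  gcongr

end Hoeffding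

lemma eventually_atTop_of_eventually_forall_Ico {ν : ℕ → ℕ} (hν : Monotone ν)
    (hν' : Tendsto ν atTop atTop) {Q : ℕ → Prop}
    (h : ∀ᶠ k in atTop, ∀ n ∈ Finset.Ico (ν k) (ν (k + 1)), Q n) :
    ∀ᶠ n in atTop, Q n := by
  obtain ⟨k₀, hk₀⟩ := eventually_atTop.1 h
  refine eventually_atTop.2 ⟨ν k₀, fun n hn => ?_⟩
  have hex : ∃ k, n < ν (k + 1) :=
    ((hν'.comp (tendsto_add_atTop_nat 1)).eventually_gt_atTop n).exists
  have hk₀k : k₀ ≤ Nat.find hex := by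
    by_contra! hlt
    exact (Nat.find_spec hex).not_ge (le_trans (hν hlt) hn)
  have hνk : ν (Nat.find hex) ≤ n := by
    rcases hk₀k.eq_or_lt with heq | hlt
    · exact heq ▸ hn
    · have := Nat.find_min hex (Nat.sub_one_lt_of_lt hlt)
      rwa [Nat.sub_add_cancel (Nat.one_le_of_lt hlt), not_lt] at this
  exact hk₀ _ hk₀k n (Finset.mem_Ico.2 ⟨hνk, Nat.find_spec hex⟩)

lemma exists_geometric_grid {η : ℝ} (hη : 0 < η) :
    ∃ ν : ℕ → ℕ, Monotone ν ∧ Tendsto ν atTop atTop ∧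
      (∀ᶠ k in atTop, (ν (k + 1) : ℝ) - ν k ≤ η * ν k) ∧
      ∀ p : ℝ, 0 < p → Summable fun k => (ν k : ℝ) ^ (-p) := by
  set ρ : ℝ := 1 + η / 2
  have hρ : 1 < ρ := by simp only [ρ]; linarith
  have hρk : Tendsto (fun k : ℕ => ρ ^ k) atTop atTop := tendsto_pow_atTop_atTop_of_one_lt hρ
  refine ⟨fun k => ⌈ρ ^ k⌉₊, fun i j hij => Nat.ceil_mono (pow_le_pow_right₀ hρ.le hij),
    tendsto_nat_ceil_atTop.comp hρk, ?_, fun p hp => ?_⟩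
  · filter_upwards [hρk.eventually_ge_atTop (2 / η)] with k hk
    have hk' : 2 ≤ η * ρ ^ k := by rwa [div_le_iff₀' hη] at hk
    have hup : (⌈ρ ^ (k + 1)⌉₊ : ℝ) ≤ ρ ^ (k + 1) + 1 :=
      (Nat.ceil_lt_add_one (by positivity)).le
    have hlow : ρ ^ k ≤ ⌈ρ ^ k⌉₊ := Nat.le_ceil _
    have : ρ ^ (k + 1) = ρ ^ k + η / 2 * ρ ^ k := by rw [pow_succ]; ring
    nlinarith
  · refine Summable.of_nonneg_of_le (fun k => by positivity) (fun k => ?_)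
      (summable_geometric_of_lt_one (by positivity) (Real.rpow_lt_one_of_one_lt_of_neg hρ
        (neg_lt_zero.2 hp)))
    rw [← Real.rpow_mul_natCast (by positivity), mul_comm, Real.rpow_natCast_mul (by positivity)]
    exact Real.rpow_le_rpow_of_nonpos (by positivity) (Nat.le_ceil _) (by linarith)

lemma sq_sum_range_lt_of_abs_lt {y : ℕ → ℝ} {ν n : ℕ} {a : ℝ} (hνn : ν ≤ n)
    (h₁ : |∑ i ∈ Finset.range ν, y i| < a / 2) (h₂ : |∑ i ∈ Finset.Ico ν n, y i| < a / 2) :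
    (∑ i ∈ Finset.range n, y i) ^ 2 < a ^ 2 := by
  rw [← Finset.sum_range_add_sum_Ico _ hνn]
  obtain ⟨h₁l, h₁r⟩ := abs_lt.1 h₁
  obtain ⟨h₂l, h₂r⟩ := abs_lt.1 h₂
  exact sq_lt_sq' (by linarith) (by linarith)

lemma tsum_measure_ne_top_of_eventually_measureReal_le {Ω : Type*} [MeasurableSpace Ω]
    {μ : Measure Ω} [IsFiniteMeasure μ] {E : ℕ → Set Ω} {f : ℕ → ℝ} (hf : Summable f)
    (h : ∀ᶠ k in atTop, μ.real (E k) ≤ f k) : ∑' k, μ (E k) ≠ ⊤ := by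
  have hE : Summable fun k => μ.real (E k) := hf.of_norm_bounded_eventually_nat <| by
    filter_upwards [h] with k hk
    rwa [Real.norm_of_nonneg measureReal_nonneg]
  have hofReal : ∀ k, μ (E k) = ENNReal.ofReal (μ.real (E k)) := fun k =>
    (ofReal_measureReal (measure_ne_top μ _)).symm
  simp_rw [hofReal]
  rw [← ENNReal.ofReal_tsum_of_nonneg (fun _ => measureReal_nonneg) hE]
  exact ENNReal.ofReal_ne_top

section PartialSums

variable {Ω : Type*} [MeasurableSpace Ω] {μ : Measure Ω} [IsProbabilityMeasure μ]
  {Y : ℕ → Ω → ℝ} {c : NNReal}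

lemma measureReal_sqrt_mul_log_le_abs_sum_le (hindep : iIndepFun Y μ)
    (hY : ∀ i, HasSubgaussianMGF (Y i) c μ) (hc : 0 < c) {κ m : ℝ} (hκ : 0 < κ) (hm : 0 < m)
    {ν : ℕ} (hν : 2 ≤ ν) {s : Finset ℕ} (hs : s.card ≤ m * ν) :
    μ.real {ω | Real.sqrt (κ * ν * Real.log ν) / 2 ≤ |∑ i ∈ s, Y i ω|}
      ≤ 2 * (ν : ℝ) ^ (-(κ / (8 * m * c))) := by
  have hν0 : (0 : ℝ) < ν := by positivity
  have hlog : 0 < Real.log ν := Real.log_pos (by exact_mod_cast hν)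
  refine (measureReal_le_abs_sum_le_of_card_le hindep hY hc hs
    (half_pos (Real.sqrt_pos.2 (by positivity)))).trans_eq ?_
  rw [div_pow, Real.sq_sqrt (by positivity), Real.rpow_def_of_pos hν0]
  congr 2
  field_simp
  ring

lemma measureReal_exists_mem_Ico_sq_sum_gt_le (hindep : iIndepFun Y μ)
    (hY : ∀ i, HasSubgaussianMGF (Y i) c μ) (hc : 0 < c) {κ η : ℝ} (hκ : 0 < κ) (hη : 0 < η)
    {ν ν' : ℕ} (hν : 2 ≤ ν) (hν' : (ν' : ℝ) - ν ≤ η * ν) :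
    μ.real {ω | ∃ n ∈ Finset.Ico ν ν', κ * n * Real.log n < (∑ i ∈ Finset.range n, Y i ω) ^ 2}
      ≤ 2 * (ν : ℝ) ^ (-(κ / (8 * c))) + 2 * η * (ν : ℝ) ^ (1 - κ / (8 * η * c)) := by
  have hν0 : (0 : ℝ) < ν := by positivity
  set a := Real.sqrt (κ * ν * Real.log ν)
  have hsub : {ω | ∃ n ∈ Finset.Ico ν ν', κ * n * Real.log n < (∑ i ∈ Finset.range n, Y i ω) ^ 2}
      ⊆ {ω | a / 2 ≤ |∑ i ∈ Finset.range ν, Y i ω|} ∪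
        ⋃ n ∈ Finset.Ico ν ν', {ω | a / 2 ≤ |∑ i ∈ Finset.Ico ν n, Y i ω|} := by
    rintro ω ⟨n, hn, hgt⟩
    by_contra! hω
    simp only [Set.mem_union, Set.mem_ofPred_eq, Set.mem_iUnion, not_or, not_exists, not_le] at hω
    obtain ⟨hνn, -⟩ := Finset.mem_Ico.1 hn
    have hνn' : (ν : ℝ) ≤ n := by exact_mod_cast hνn
    have : a ^ 2 ≤ κ * n * Real.log n := by
      rw [Real.sq_sqrt (by positivity)]
      gcongr
    linarith [sq_sum_range_lt_of_abs_lt hνn hω.1 (hω.2 n hn)]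
  have htail : ∀ n ∈ Finset.Ico ν ν', μ.real {ω | a / 2 ≤ |∑ i ∈ Finset.Ico ν n, Y i ω|}
      ≤ 2 * (ν : ℝ) ^ (-(κ / (8 * η * c))) := fun n hn => by
    obtain ⟨hνn, hnν'⟩ := Finset.mem_Ico.1 hn
    refine measureReal_sqrt_mul_log_le_abs_sum_le hindep hY hc hκ hη hν ?_
    rw [Nat.card_Ico, Nat.cast_sub hνn]
    linarith [(Nat.cast_lt (α := ℝ)).2 hnν']
  have hcard : ((Finset.Ico ν ν').card : ℝ) ≤ η * ν := by
    rw [Nat.card_Ico]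
    rcases le_total ν ν' with h | h
    · rwa [Nat.cast_sub h]
    · simp [Nat.sub_eq_zero_of_le h]; positivity
  calc _ ≤ _ := measureReal_mono hsub
    _ ≤ _ := measureReal_union_le _ _
    _ ≤ 2 * (ν : ℝ) ^ (-(κ / (8 * c)))
        + (Finset.Ico ν ν').card * (2 * (ν : ℝ) ^ (-(κ / (8 * η * c)))) := by
      gcongr
      · simpa using measureReal_sqrt_mul_log_le_abs_sum_le hindep hY hc hκ one_pos hν
          (s := Finset.range ν) (by simp)
      · refine (measureReal_biUnion_finset_le _ _).trans ?_
        simpa using Finset.sum_le_sum htail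
    _ ≤ _ := by
      rw [Real.rpow_sub hν0, Real.rpow_one, Real.rpow_neg hν0.le (κ / (8 * η * c)),
        div_eq_mul_inv (ν : ℝ)]
      have hy : 0 ≤ 2 * ((ν : ℝ) ^ (κ / (8 * η * c)))⁻¹ := by positivity
      linarith [mul_le_mul_of_nonneg_right hcard hy]

theorem ae_eventually_sq_sum_range_le (hindep : iIndepFun Y μ)
    (hY : ∀ i, HasSubgaussianMGF (Y i) c μ) (hc : 0 < c) {κ : ℝ} (hκ : 0 < κ) :
    ∀ᵐ ω ∂μ, ∀ᶠ n in atTop, (∑ i ∈ Finset.range n, Y i ω) ^ 2 ≤ κ * n * Real.log n := by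
  -- This block length makes the union bound over a block `O(1 / ν k)`, summable on the grid.
  set η := κ / (16 * c)
  have hη : 0 < η := by positivity
  obtain ⟨ν, hmono, htend, hgap, hsum⟩ := exists_geometric_grid hη
  set E : ℕ → Set Ω := fun k => {ω | ∃ n ∈ Finset.Ico (ν k) (ν (k + 1)),
    κ * n * Real.log n < (∑ i ∈ Finset.range n, Y i ω) ^ 2}
  have hE : ∑' k, μ (E k) ≠ ⊤ := by
    refine tsum_measure_ne_top_of_eventually_measureReal_le
      (((hsum (κ / (8 * c)) (by positivity)).mul_left 2).add ((hsum 1 one_pos).mul_left (2 * η))) ?_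
    filter_upwards [hgap, htend.eventually_ge_atTop 2] with k hk hk2
    have h := measureReal_exists_mem_Ico_sq_sum_gt_le hindep hY hc hκ hη hk2 hk
    rwa [show 1 - κ / (8 * η * c) = -1 by simp only [η]; field_simp; ring] at h
  filter_upwards [ae_eventually_notMem hE] with ω hω
  refine eventually_atTop_of_eventually_forall_Ico hmono htend (hω.mono fun k hk n hn => ?_)
  simp only [E, Set.mem_ofPred_eq, not_exists, not_and, not_lt] at hk
  exact hk n hn

end PartialSums

section EmpiricalFrequency

variable {Ω β : Type*} [MeasurableSpace Ω] [MeasurableSpace β] {μ : Measure Ω}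
  [IsProbabilityMeasure μ] {P : Measure β} {X : ℕ → Ω → β}

theorem ae_eventually_sq_card_filter_sub_le (hmeas : ∀ k, Measurable (X k))
    (hlaw : ∀ k, μ.map (X k) = P) (hindep : iIndepFun X μ) {S : Set β} (hS : MeasurableSet S)
    {κ : ℝ} (hκ : 0 < κ) :
    ∀ᵐ ω ∂μ, ∀ᶠ n in atTop,
      ((((Finset.range n).filter fun k => X k ω ∈ S).card : ℝ) - n * P.real S) ^ 2
        ≤ κ * n * Real.log n := by
  set f : β → ℝ := S.indicator 1
  have hf : Measurable f := measurable_const.indicator hS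
  have hmean : ∀ k, μ[fun ω => f (X k ω)] = P.real S := fun k => by
    rw [← integral_indicator_one hS, ← hlaw k,
      integral_map (hmeas k).aemeasurable hf.aestronglyMeasurable]
  have hsub : ∀ k, HasSubgaussianMGF (fun ω => f (X k ω) - P.real S)
      ((‖(1 : ℝ) - 0‖₊ / 2) ^ 2) μ := fun k => by
    rw [← hmean k]
    refine hasSubgaussianMGF_of_mem_Icc (hf.comp (hmeas k)).aemeasurable (ae_of_all _ fun ω => ?_)
    simp only [f, Set.indicator_apply]
    split_ifs <;> simp
  have hsum : ∀ n ω, ∑ k ∈ Finset.range n, (f (X k ω) - P.real S)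
      = (((Finset.range n).filter fun k => X k ω ∈ S).card : ℝ) - n * P.real S := by
    intro n ω
    simp [f, Finset.sum_sub_distrib, Set.indicator_apply, Finset.sum_boole]
  filter_upwards [ae_eventually_sq_sum_range_le
    (hindep.comp (fun _ x => f x - P.real S) fun _ => hf.sub_const _) hsub (by norm_num) hκ]
    with ω hω
  simpa only [Function.comp_apply, hsum] using hω

end EmpiricalFrequency

namespace MultiSeg

/-- For `p = 0` this holds only through the junk values `x / 0 = 0` and `log 0 = 0`. -/
lemma ite_mul_log_div_le {x p : ℝ} (hx : 0 ≤ x) (hp : 0 ≤ p) :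
    (if 0 < x then x * Real.log (x / p) else 0) ≤ (x - p) ^ 2 / p + (x - p) := by
  rcases hp.eq_or_lt with rfl | hp
  · split_ifs <;> simp [hx]
  split_ifs with hx0
  · calc x * Real.log (x / p) ≤ x * (x / p - 1) :=
          mul_le_mul_of_nonneg_left (Real.log_le_sub_one_of_pos (div_pos hx0 hp)) hx
      _ = (x - p) ^ 2 / p + (x - p) := by field_simp; ring
  · obtain rfl : x = 0 := le_antisymm (not_lt.1 hx0) hx
    rw [zero_sub, neg_sq, sq, mul_self_div_self]
    simp

lemma KL_le_sum_sq_sub_div {ι : Type*} [Fintype ι] {x p : ι → ℝ} (hx : ∀ i, 0 ≤ x i)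
    (hp : ∀ i, 0 ≤ p i) (hsum : ∑ i, x i = ∑ i, p i) :
    KL x p ≤ ∑ i, (x i - p i) ^ 2 / p i :=
  calc KL x p ≤ ∑ i, ((x i - p i) ^ 2 / p i + (x i - p i)) :=
        Finset.sum_le_sum fun i _ => ite_mul_log_div_le (hx i) (hp i)
    _ = ∑ i, (x i - p i) ^ 2 / p i := by
        rw [Finset.sum_add_distrib, Finset.sum_sub_distrib, hsum, sub_self, add_zero]

lemma KL_div_lt_of_sq_sub_le {ι : Type*} [Fintype ι] {c p : ι → ℝ} {n : ℕ} {α : ℝ}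
    (hα : 0 < α) (hn : 1 < n) (hc : ∀ i, 0 ≤ c i) (hp : ∀ i, 0 ≤ p i)
    (hcsum : ∑ i, c i = n) (hpsum : ∑ i, p i = 1)
    (hdev : ∀ i, 0 < p i →
      (c i - n * p i) ^ 2 ≤ α * p i / (Fintype.card ι + 1) * n * Real.log n) :
    KL (fun i => c i / n) p < α * Real.log n / n := by
  set m := (Fintype.card ι : ℝ)
  have hn0 : (0 : ℝ) < n := by positivity
  have hlog : 0 < Real.log n := Real.log_pos (by exact_mod_cast hn)
  have hm : 0 < m + 1 := by positivity
  have hterm : ∀ i, (c i / n - p i) ^ 2 / p i ≤ α * Real.log n / ((m + 1) * n) := fun i => by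
    rcases (hp i).eq_or_lt with h | h
    · rw [← h, div_zero]
      positivity
    rw [show (c i / n - p i) ^ 2 / p i = (c i - n * p i) ^ 2 / (n ^ 2 * p i) by field_simp,
      div_le_div_iff₀ (by positivity) (by positivity)]
    calc (c i - n * p i) ^ 2 * ((m + 1) * n)
        ≤ α * p i / (m + 1) * n * Real.log n * ((m + 1) * n) := by gcongr; exact hdev i h
      _ = α * Real.log n * (n ^ 2 * p i) := by field_simp
  calc KL (fun i => c i / n) p ≤ ∑ i, (c i / n - p i) ^ 2 / p i :=
        KL_le_sum_sq_sub_div (fun i => div_nonneg (hc i) hn0.le) hp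
          (by rw [← Finset.sum_div, hcsum, hpsum, div_self hn0.ne'])
    _ ≤ m * (α * Real.log n / ((m + 1) * n)) := by
        simpa using Finset.sum_le_sum fun i (_ : i ∈ Finset.univ) => hterm i
    _ = m / (m + 1) * (α * Real.log n / n) := by field_simp
    _ < α * Real.log n / n :=
        mul_lt_of_lt_one_left (by positivity) ((div_lt_one (by positivity)).2 (lt_add_one m))

lemma measurableSet_cyl {N : ℕ} {A : Fin N → Type*} [∀ i, MeasurableSpace (A i)]
    [∀ i, MeasurableSingletonClass (A i)] (I : Finset (Fin N)) (b : Str A I) :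
    MeasurableSet (cyl I b) := by
  have : cyl I b = ⋂ i : {j // j ∈ I}, (fun x : Config A => x i.1) ⁻¹' {b i} := by
    ext x
    simp [cyl]
  rw [this]
  exact .iInter fun i => measurable_pi_apply i.1 (measurableSet_singleton _)

lemma sum_marg_eq_one {N : ℕ} {A : Fin N → Type*} [∀ i, Fintype (A i)]
    [∀ i, MeasurableSpace (A i)] [∀ i, MeasurableSingletonClass (A i)]
    (P : Measure (Config A)) [IsProbabilityMeasure P] (I : Finset (Fin N)) :
    ∑ b : Str A I, marg P I b = 1 := by
  have hdisj : Pairwise (Function.onFun Disjoint (cyl (A := A) I)) := fun b b' hbb' =>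
    Set.disjoint_left.2 fun x hb hb' => hbb' (funext fun i => (hb i).symm.trans (hb' i))
  have hunion : ⋃ b, cyl (A := A) I b = Set.univ :=
    Set.eq_univ_of_forall fun x => Set.mem_iUnion.2 ⟨fun i => x i.1, fun _ => rfl⟩
  simp only [marg]
  rw [← ENNReal.toReal_sum fun _ _ => measure_ne_top _ _, ← tsum_fintype (L := .unconditional _),
    ← measure_iUnion hdisj (measurableSet_cyl I), hunion, measure_univ, ENNReal.toReal_one]

lemma sum_count_eq {N : ℕ} {A : Fin N → Type*} [∀ i, Fintype (A i)] {Ω : Type*}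
    (X : ℕ → Ω → Config A) (I : Finset (Fin N)) (n : ℕ) (ω : Ω) :
    ∑ b : Str A I, count X I b n ω = n := by
  conv_rhs => rw [← Finset.card_range n]
  rw [Finset.card_eq_sum_card_fiberwise (f := fun k (i : {j // j ∈ I}) => X k ω i.1)
    (t := Finset.univ) fun _ _ => Finset.mem_coe.2 (Finset.mem_univ _)]
  simp only [count, funext_iff]

lemma count_eq_card_filter_mem_cyl {N : ℕ} {A : Fin N → Type*} {Ω : Type*}
    (X : ℕ → Ω → Config A) (I : Finset (Fin N)) (b : Str A I) (n : ℕ) (ω : Ω) :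
    count X I b n ω = ((Finset.range n).filter fun k => X k ω ∈ cyl I b).card := by
  simp only [count, cyl, Set.mem_ofPred_eq]
  congr

theorem kl_empirical_marginal_general
    {N : ℕ} {A : Fin N → Type*} [∀ i, Fintype (A i)]
    [∀ i, MeasurableSpace (A i)] [∀ i, MeasurableSingletonClass (A i)]
    {Ω : Type*} [MeasurableSpace Ω] (μ : Measure Ω) [IsProbabilityMeasure μ]
    (P : Measure (Config A)) [IsProbabilityMeasure P]
    (X : ℕ → Ω → Config A)
    (hmeas : ∀ k, Measurable (X k))
    (hlaw : ∀ k, Measure.map (X k) μ = P)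
    (hindep : iIndepFun X μ)
    (l r : ℕ)
    (α : ℝ) (hα : 0 < α) :
    ∀ᵐ ω ∂μ, ∃ n₀ : ℕ, ∀ n ≥ n₀,
      KL (fun b : Str A (block N l r) => (count X (block N l r) b n ω : ℝ) / n)
        (fun b => marg P (block N l r) b) < α * Real.log n / n := by
  set I := block N l r
  set m := (Fintype.card (Str A I) : ℝ)
  have hdev : ∀ᵐ ω ∂μ, ∀ b : Str A I, 0 < marg P I b → ∀ᶠ n in atTop,
      ((count X I b n ω : ℝ) - n * marg P I b) ^ 2
        ≤ α * marg P I b / (m + 1) * n * Real.log n := by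
    refine ae_all_iff.2 fun b => ?_
    by_cases hb : 0 < marg P I b
    · filter_upwards [ae_eventually_sq_card_filter_sub_le hmeas hlaw hindep
        (measurableSet_cyl I b) (by positivity : 0 < α * marg P I b / (m + 1))]
        with ω hω using fun _ => by
          simpa only [count_eq_card_filter_mem_cyl, marg, measureReal_def] using hω
    · exact ae_of_all _ fun ω h => absurd h hb
  filter_upwards [hdev] with ω hω
  obtain ⟨n₀, hn₀⟩ := eventually_atTop.1 ((eventually_gt_atTop 1).and
    (eventually_all.2 fun b => eventually_imp_distrib_left.2 (hω b)))
  exact ⟨n₀, fun n hn => KL_div_lt_of_sq_sub_le hα (hn₀ n hn).1 (fun _ => Nat.cast_nonneg _)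
    (fun _ => ENNReal.toReal_nonneg) (by exact_mod_cast sum_count_eq X I n ω)
    (sum_marg_eq_one P I) (hn₀ n hn).2⟩

/-- **Lemma 1.**  For any block `I = (l+1):r` and any `α > 0`, the Kullback–Leibler
divergence between the empirical distribution `P̂_n` on `A^I` and the marginal `P`
satisfies `D(P̂_n ‖ P) < α log n / n` eventually almost surely as `n → ∞`. -/
theorem kl_empirical_marginal
    {N : ℕ} {A : Fin N → Type*} [∀ i, Fintype (A i)] [∀ i, Nonempty (A i)]
    [∀ i, MeasurableSpace (A i)] [∀ i, MeasurableSingletonClass (A i)]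
    {Ω : Type*} [MeasurableSpace Ω] (μ : Measure Ω) [IsProbabilityMeasure μ]
    (P : Measure (Config A)) [IsProbabilityMeasure P]
    (X : ℕ → Ω → Config A)
    (hmeas : ∀ k, Measurable (X k))
    (hlaw : ∀ k, Measure.map (X k) μ = P)
    (hindep : iIndepFun X μ)
    (l r : ℕ) (hlr : l < r) (hrN : r ≤ N)
    (α : ℝ) (hα : 0 < α) :
    ∀ᵐ ω ∂μ, ∃ n₀ : ℕ, ∀ n ≥ n₀,
      KL (fun b : Str A (block N l r) => (count X (block N l r) b n ω : ℝ) / n)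
        (fun b => marg P (block N l r) b) < α * Real.log n / n :=
  kl_empirical_marginal_general μ P X hmeas hlaw hindep l r α hα

end MultiSeg
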